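/- arXiv:1801.08203 — 2 statements merged into one kernel-verified Lean document; each statement's English description precedes it below -/
import Mathlib

section
/- For every nonzero real number t₀, if S_{t₀}(N) is a discrete subgroup of GL₂(ℝ), then the full image S_{t₀}(B₃) is a discrete subgroup of GL₂(ℝ). -/
open Matrix
open scoped MatrixGroups

/-- The braid relations on `m` generators. -/
def braidRels (m : ℕ) : Set (FreeGroup (Fin m)) :=
  { r | (∃ i j : Fin m, (i : ℕ) + 1 = (j : ℕ) ∧
          r = FreeGroup.of i * FreeGroup.of j * FreeGroup.of i *
              (FreeGroup.of j * FreeGroup.of i * FreeGroup.of j)⁻¹) ∨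
        (∃ i j : Fin m, (i : ℕ) + 2 ≤ (j : ℕ) ∧
          r = FreeGroup.of i * FreeGroup.of j * (FreeGroup.of j * FreeGroup.of i)⁻¹) }

/-- The braid group on `n` strands, presented by `n-1` generators and the braid relations. -/
abbrev BraidGroup (n : ℕ) : Type := PresentedGroup (braidRels (n - 1))

/-- The braid group on three strands. -/
abbrev B3 : Type := BraidGroup 3

/-- The standard generators of `B3`. -/
def b3 (i : Fin 2) : B3 := PresentedGroup.of i

/-- `S` is the Burau specialization of `B3` at the real parameter `t₀`. -/
def IsBurau3 (t₀ : ℝ) (S : B3 →* GL (Fin 2) ℝ) : Prop :=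
  (S (b3 0) : Matrix (Fin 2) (Fin 2) ℝ) = !![-t₀, 1; 0, 1] ∧
  (S (b3 1) : Matrix (Fin 2) (Fin 2) ℝ) = !![1, 0; t₀, -t₀]

/-- The element `a₁ = σ₁⁻¹σ₂` of `B3`. -/
def a₁ : B3 := (b3 0)⁻¹ * b3 1

/-- The element `a₂ = σ₂σ₁⁻¹` of `B3`. -/
def a₂ : B3 := b3 1 * (b3 0)⁻¹

/-- The (normal) subgroup `N` of `B3` generated by `a₁` and `a₂`. -/
def N3 : Subgroup B3 := Subgroup.closure {a₁, a₂}


/-!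
If `|t₀| = 1`, both generators are integral matrices of determinant `±1`, so `S(B₃)` lies in
the discrete group `GL₂(ℤ)`. Otherwise, since `σ₁` normalizes `N` and `N` is generated by
elements `σ₁⁻¹σ₂`, `σ₂σ₁⁻¹` of determinant `1`, every braid is `n σ₁ᵏ` with `n ∈ N` and
`det S(n σ₁ᵏ) = (-t₀)ᵏ`. These powers are discrete in `ℝˣ`, so an element of `S(B₃)` close to
`1` has `k = 0` and lies in `S(N)`, which is discrete.
-/

open Subgroup

section Discreteness

variable {G : Type*} [Group G] [TopologicalSpace G] [IsTopologicalGroup G]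

theorem Subgroup.discreteTopology_iff_exists_isOpen {K : Subgroup G} :
    DiscreteTopology K ↔ ∃ U : Set G, IsOpen U ∧ 1 ∈ U ∧ ∀ g ∈ K, g ∈ U → g = 1 := by
  rw [discreteTopology_iff_isOpen_singleton_one, isOpen_induced_iff]
  refine exists_congr fun U => and_congr_right fun _ => ?_
  simp only [Set.ext_iff, Subtype.forall, Set.mem_preimage, Set.mem_singleton_iff,
    Subgroup.mk_eq_one]
  exact ⟨fun h => ⟨(h 1 K.one_mem).2 rfl, fun g hg => (h g hg).1⟩,
    fun ⟨h1, h⟩ g hg => ⟨h g hg, fun hg1 => hg1 ▸ h1⟩⟩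

theorem Subgroup.discreteTopology_of_discreteTopology_map_of_inf_ker_le
    {H : Type*} [Group H] [TopologicalSpace H] [IsTopologicalGroup H]
    {Γ Λ : Subgroup G} (f : G →* H) (hf : Continuous f) [DiscreteTopology (Γ.map f)]
    [DiscreteTopology Λ] (hle : Γ ⊓ f.ker ≤ Λ) : DiscreteTopology Γ := by
  obtain ⟨U, hU, hU1, hUΓ⟩ := discreteTopology_iff_exists_isOpen.1 ‹DiscreteTopology (Γ.map f)›
  obtain ⟨V, hV, hV1, hVΛ⟩ := discreteTopology_iff_exists_isOpen.1 ‹DiscreteTopology Λ›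
  refine discreteTopology_iff_exists_isOpen.2
    ⟨f ⁻¹' U ∩ V, (hU.preimage hf).inter hV, ⟨by simpa using hU1, hV1⟩, ?_⟩
  rintro g hg ⟨hgU, hgV⟩
  exact hVΛ g (hle ⟨hg, hUΓ _ (mem_map_of_mem f hg) hgU⟩) hgV

end Discreteness

theorem Subgroup.discreteTopology_zpowers_of_norm_ne_one {𝕜 : Type*} [NormedDivisionRing 𝕜]
    {u : 𝕜ˣ} (hu : ‖(u : 𝕜)‖ ≠ 1) : DiscreteTopology (zpowers u) := by
  wlog hu1 : 1 < ‖(u : 𝕜)‖ generalizing u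
  · have h : 1 < ‖((u⁻¹ : 𝕜ˣ) : 𝕜)‖ := by
      rw [Units.val_inv_eq_inv_val, norm_inv]
      exact one_lt_inv_iff₀.2 ⟨norm_pos_iff.2 u.ne_zero, lt_of_le_of_ne (not_lt.1 hu1) hu⟩
    rw [← zpowers_inv]
    exact this h.ne' h
  have hcont : Continuous fun x : 𝕜ˣ => ‖(x : 𝕜)‖ := continuous_norm.comp Units.continuous_val
  refine discreteTopology_iff_exists_isOpen.2
    ⟨{x | ‖(u : 𝕜)‖ ^ (-1 : ℤ) < ‖(x : 𝕜)‖ ∧ ‖(x : 𝕜)‖ < ‖(u : 𝕜)‖ ^ (1 : ℤ)},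
      (isOpen_lt continuous_const hcont).inter (isOpen_lt hcont continuous_const), ?_, ?_⟩
  · simp [hu1, inv_lt_one_of_one_lt₀ hu1]
  rintro _ ⟨n, rfl⟩ ⟨h1, h2⟩
  simp only [Units.val_zpow_eq_zpow_val, norm_zpow, zpow_lt_zpow_iff_right₀ hu1] at h1 h2
  simp [show n = 0 by omega]

section BraidGroup

theorem b3_braid : b3 0 * b3 1 * b3 0 = b3 1 * b3 0 * b3 1 := by
  have hrel := PresentedGroup.one_of_mem (rels := braidRels 2) (Or.inl ⟨0, 1, rfl, rfl⟩)
  simp only [map_mul, map_inv, mul_inv_eq_one] at hrel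
  exact hrel

theorem a₁_mem_N3 : a₁ ∈ N3 := subset_closure (Set.mem_insert _ _)

theorem a₂_mem_N3 : a₂ ∈ N3 := subset_closure (Set.mem_insert_of_mem _ rfl)

theorem b3_zero_conj_a₁ : b3 0 * a₁ * (b3 0)⁻¹ = a₂ := by
  simp only [a₁, a₂]
  group

theorem b3_zero_conj_a₂ : b3 0 * a₂ * (b3 0)⁻¹ = a₁⁻¹ * a₂ :=
  calc b3 0 * a₂ * (b3 0)⁻¹ = (b3 1)⁻¹ * (b3 1 * b3 0 * b3 1) * (b3 0)⁻¹ ^ 2 := by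
        simp only [a₂]; group
    _ = (b3 1)⁻¹ * (b3 0 * b3 1 * b3 0) * (b3 0)⁻¹ ^ 2 := by rw [b3_braid]
    _ = a₁⁻¹ * a₂ := by simp only [a₁, a₂]; group

theorem b3_zero_mem_normalizer_N3 : b3 0 ∈ normalizer (N3 : Set B3) := by
  rw [mem_normalizer_iff_map_conj_eq, N3, MonoidHom.map_closure, Set.image_pair]
  change closure {b3 0 * a₁ * (b3 0)⁻¹, b3 0 * a₂ * (b3 0)⁻¹} = _
  rw [b3_zero_conj_a₁, b3_zero_conj_a₂]
  apply le_antisymm <;> rw [closure_le, Set.insert_subset_iff, Set.singleton_subset_iff]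
  · exact ⟨a₂_mem_N3, mul_mem (inv_mem a₁_mem_N3) a₂_mem_N3⟩
  · refine ⟨?_, Subgroup.subset_closure (Set.mem_insert _ _)⟩
    have h : a₂ * (a₁⁻¹ * a₂)⁻¹ ∈ closure {a₂, a₁⁻¹ * a₂} :=
      mul_mem (Subgroup.subset_closure (Set.mem_insert _ _))
        (inv_mem (Subgroup.subset_closure (Set.mem_insert_of_mem _ rfl)))
    rwa [_root_.mul_inv_rev, inv_inv, mul_inv_cancel_left] at h

theorem exists_mem_N3_mul_zpow_eq (g : B3) : ∃ n ∈ N3, ∃ k : ℤ, n * b3 0 ^ k = g := by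
  have hsup : N3 ⊔ zpowers (b3 0) = ⊤ := by
    refine eq_top_iff.2 fun g _ =>
      PresentedGroup.generated_by _ _ (Fin.forall_fin_two.2 ⟨?_, ?_⟩) g
    · exact mem_sup_right (mem_zpowers (b3 0))
    · have h : b3 1 = b3 0 * a₁ := by simp only [a₁]; group
      change b3 1 ∈ _
      exact h ▸ mul_mem (mem_sup_right (mem_zpowers _)) (mem_sup_left a₁_mem_N3)
  have hg : g ∈ ((N3 ⊔ zpowers (b3 0) : Subgroup B3) : Set B3) := by simp [hsup]
  rw [coe_mul_of_right_le_normalizer_left _ _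
    ((zpowers_le (G := B3)).2 b3_zero_mem_normalizer_N3)] at hg
  obtain ⟨n, hn, _, ⟨k, rfl⟩, rfl⟩ := hg
  exact ⟨n, hn, k, rfl⟩

end BraidGroup

section IntegralMatrices

variable {n : Type*} [Fintype n] [DecidableEq n]

theorem Matrix.GeneralLinearGroup.discreteTopology_range_map_intCast :
    DiscreteTopology (GeneralLinearGroup.map (n := n) (Int.castRingHom ℝ)).range :=
  Real.isClosedEmbedding_intCast.generalLinearGroup_map.isEmbedding.toHomeomorph.discreteTopology

theorem Matrix.GeneralLinearGroup.mem_range_map_intCast {g : GL n ℝ} (A : Matrix n n ℤ)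
    (hA : IsUnit A.det) (hg : (g : Matrix n n ℝ) = A.map (↑)) :
    g ∈ (GeneralLinearGroup.map (Int.castRingHom ℝ)).range :=
  ⟨nonsingInvUnit A hA, Units.ext <| Matrix.ext fun i j => by
    rw [GeneralLinearGroup.map_apply, hg]
    rfl⟩

end IntegralMatrices

theorem range_le_of_forall_b3_mem {G : Type*} [Group G] {f : B3 →* G} {K : Subgroup G}
    (h : ∀ i, f (b3 i) ∈ K) : f.range ≤ K := by
  rintro _ ⟨g, rfl⟩
  exact PresentedGroup.generated_by _ (K.comap f) h g

namespace IsBurau3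

open GeneralLinearGroup

variable {t₀ : ℝ} {S : B3 →* GL (Fin 2) ℝ}

theorem range_le_range_map_intCast {u : ℤ} (hu : IsUnit u) (hS : IsBurau3 u S) :
    S.range ≤ (GeneralLinearGroup.map (Int.castRingHom ℝ)).range := by
  refine range_le_of_forall_b3_mem (Fin.forall_fin_two.2 ⟨?_, ?_⟩)
  · refine mem_range_map_intCast !![-u, 1; 0, 1] (by simpa using hu.neg) ?_
    rw [hS.1]
    ext i j; fin_cases i <;> fin_cases j <;> simp
  · refine mem_range_map_intCast !![1, 0; u, -u] (by simpa using hu.neg) ?_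
    rw [hS.2]
    ext i j; fin_cases i <;> fin_cases j <;> simp

theorem val_det_b3 (hS : IsBurau3 t₀ S) : ∀ i, (det (S (b3 i)) : ℝ) = -t₀ :=
  Fin.forall_fin_two.2
    ⟨by rw [val_det_apply, hS.1, det_fin_two_of]; ring,
      by rw [val_det_apply, hS.2, det_fin_two_of]; ring⟩

theorem abs_val_det_b3 (hS : IsBurau3 t₀ S) (i : Fin 2) : |(det (S (b3 i)) : ℝ)| = |t₀| := by
  rw [hS.val_det_b3, abs_neg]

theorem N3_le_ker_det (hS : IsBurau3 t₀ S) : N3 ≤ (det.comp S).ker := by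
  have h : det (S (b3 1)) = det (S (b3 0)) :=
    Units.ext ((hS.val_det_b3 1).trans (hS.val_det_b3 0).symm)
  rw [N3, closure_le, Set.insert_subset_iff, Set.singleton_subset_iff]
  simp [a₁, a₂, h]

theorem det_mul_zpow (hS : IsBurau3 t₀ S) {n : B3} (hn : n ∈ N3) (k : ℤ) :
    det (S (n * b3 0 ^ k)) = det (S (b3 0)) ^ k := by
  have h : det (S n) = 1 := hS.N3_le_ker_det hn
  rw [map_mul, map_mul, h, one_mul, map_zpow, map_zpow]

theorem map_det_range_le_zpowers (hS : IsBurau3 t₀ S) :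
    S.range.map det ≤ zpowers (det (S (b3 0))) := by
  rintro _ ⟨_, ⟨g, rfl⟩, rfl⟩
  obtain ⟨n, hn, k, rfl⟩ := exists_mem_N3_mul_zpow_eq g
  exact ⟨k, (hS.det_mul_zpow hn k).symm⟩

theorem range_inf_ker_det_le (hS : IsBurau3 t₀ S) (ht : |t₀| ≠ 1) :
    S.range ⊓ det.ker ≤ N3.map S := by
  rintro _ ⟨⟨g, rfl⟩, hg⟩
  obtain ⟨n, hn, k, rfl⟩ := exists_mem_N3_mul_zpow_eq g
  set u := det (S (b3 0))
  have hu : |(u : ℝ)| ≠ 1 := hS.abs_val_det_b3 0 ▸ ht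
  have hk : |(u : ℝ)| ^ k = |(u : ℝ)| ^ (0 : ℤ) := by
    have h := congrArg (fun x : ℝˣ => |(x : ℝ)|) ((hS.det_mul_zpow hn k).symm.trans hg)
    simpa only [Units.val_zpow_eq_zpow_val, abs_zpow, Units.val_one, abs_one, zpow_zero] using h
  rw [zpow_right_injective₀ (abs_pos.2 u.ne_zero) hu hk, zpow_zero, mul_one]
  exact mem_map_of_mem S hn

end IsBurau3

theorem burau_B3_discrete_of_discrete_on_N_general (t₀ : ℝ)
    (S : B3 →* GL (Fin 2) ℝ) (hS : IsBurau3 t₀ S)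
    (hN : DiscreteTopology ↥(N3.map S)) :
    DiscreteTopology ↥S.range := by
  by_cases ht : |t₀| = 1
  · obtain ⟨u, hu, rfl⟩ : ∃ u : ℤ, IsUnit u ∧ (u : ℝ) = t₀ := by
      rcases abs_eq zero_le_one |>.1 ht with rfl | rfl
      exacts [⟨1, isUnit_one, Int.cast_one⟩, ⟨-1, isUnit_one.neg, by simp⟩]
    exact DiscreteTopology.of_subset GeneralLinearGroup.discreteTopology_range_map_intCast
      (hS.range_le_range_map_intCast hu)
  · have : DiscreteTopology (S.range.map GeneralLinearGroup.det) :=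
      DiscreteTopology.of_subset
        (discreteTopology_zpowers_of_norm_ne_one (by rwa [Real.norm_eq_abs, hS.abs_val_det_b3]))
        hS.map_det_range_le_zpowers
    exact discreteTopology_of_discreteTopology_map_of_inf_ker_le _
      GeneralLinearGroup.continuous_det (hS.range_inf_ker_det_le ht)

theorem burau_B3_discrete_of_discrete_on_N (t₀ : ℝ) (h0 : t₀ ≠ 0)
    (S : B3 →* GL (Fin 2) ℝ) (hS : IsBurau3 t₀ S)
    (hN : DiscreteTopology ↥(N3.map S)) :
    DiscreteTopology ↥S.range :=
  burau_B3_discrete_of_discrete_on_N_general t₀ S hS hN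
end

section
/- The image of the Burau specialization S⁴_{t₀} : B₄ → GL₃(ℝ) at t₀ = (3+√5)/2 is a discrete subgroup of GL₃(ℝ). -/
open Matrix
open scoped MatrixGroups

/-- The braid group on four strands. -/
abbrev B4 : Type := BraidGroup 4

/-- The standard generators of `B4`. -/
def b4 (i : Fin 3) : B4 := PresentedGroup.of i

/-- `S` is the Burau specialization of `B4` at the real parameter `t₀`. -/
def IsBurau4 (t₀ : ℝ) (S : B4 →* GL (Fin 3) ℝ) : Prop :=
  (S (b4 0) : Matrix (Fin 3) (Fin 3) ℝ) = !![-t₀, 1, 0; 0, 1, 0; 0, 0, 1] ∧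
  (S (b4 1) : Matrix (Fin 3) (Fin 3) ℝ) = !![1, 0, 0; t₀, -t₀, 1; 0, 0, 1] ∧
  (S (b4 2) : Matrix (Fin 3) (Fin 3) ℝ) = !![1, 0, 0; 0, 1, 0; 0, t₀, -t₀]

/-!
Write `t₀ = φ²`, where `φ` is the golden ratio. The Burau matrices at `t₀` have entries in
`ℤ[φ]`, and Squier's form `J` satisfies `Aᵀ J Ā = J`, where `Ā` is the Galois conjugate of `A`
(`φ ↦ ψ`, so `t₀ ↦ ψ² = t₀⁻¹`). On the image, `Ā = J⁻¹ (A⁻¹)ᵀ J` is therefore a continuous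
function of `A`, so near the identity both `A - 1` and its conjugate have entries smaller than
`1 / 2`. Since `z ↦ (z, z̄)` embeds `ℤ[φ]` as a lattice in `ℝ²`, this forces `A = 1`.
-/

open Filter Topology
open scoped goldenRatio QuadraticAlgebra

/-- `ℤ[φ]`, with `ω` standing for `φ` since `ω * ω = 1 + ω`. -/
abbrev GoldenInt : Type := QuadraticAlgebra ℤ 1 1

namespace GoldenInt

noncomputable def embedding (x : ℝ) (hx : x * x = 1 + x) : GoldenInt →+* ℝ :=
  (QuadraticAlgebra.lift ⟨x, by simpa using hx⟩ : GoldenInt →ₐ[ℤ] ℝ).toRingHom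

theorem embedding_apply (x : ℝ) (hx : x * x = 1 + x) (z : GoldenInt) :
    embedding x hx z = z.re + z.im * x := by
  simp [embedding]

noncomputable def toReal : GoldenInt →+* ℝ :=
  embedding φ (by rw [← sq, Real.goldenRatio_sq, add_comm])

noncomputable def conjToReal : GoldenInt →+* ℝ :=
  embedding ψ (by rw [← sq, Real.goldenConj_sq, add_comm])

theorem toReal_sub_conjToReal (z : GoldenInt) : toReal z - conjToReal z = z.im * √5 := by
  simp only [toReal, conjToReal, embedding_apply, ← Real.goldenRatio_sub_goldenConj]
  ring

theorem eq_zero_of_abs_lt_half {z : GoldenInt} (h : |toReal z| < 1 / 2)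
    (h' : |conjToReal z| < 1 / 2) : z = 0 := by
  have him : z.im = 0 := by
    have hsqrt : (1 : ℝ) ≤ √5 := Real.one_le_sqrt.2 (by norm_num)
    have : |(z.im : ℝ)| * √5 < 1 := by
      rw [← abs_of_pos (by positivity : (0 : ℝ) < √5), ← abs_mul, ← toReal_sub_conjToReal]
      exact (abs_sub _ _).trans_lt (by linarith)
    have : |(z.im : ℝ)| < 1 := by nlinarith [abs_nonneg (z.im : ℝ)]
    exact_mod_cast Int.abs_lt_one_iff.1 (by exact_mod_cast this)
  have hre : |(z.re : ℝ)| < 1 / 2 := by simpa [toReal, embedding_apply, him] using h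
  have : |z.re| < 1 := by exact_mod_cast hre.trans (by norm_num : (1 / 2 : ℝ) < 1)
  exact QuadraticAlgebra.ext (Int.abs_lt_one_iff.1 this) him

theorem matrix_eq_of_abs_sub_lt_half {n : Type*} {M N : Matrix n n GoldenInt}
    (h : ∀ i j, |toReal (M i j) - toReal (N i j)| < 1 / 2)
    (h' : ∀ i j, |conjToReal (M i j) - conjToReal (N i j)| < 1 / 2) : M = N := by
  ext i j : 1
  exact sub_eq_zero.1 <| eq_zero_of_abs_lt_half (by simpa only [map_sub] using h i j)
    (by simpa only [map_sub] using h' i j)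

def omegaUnit : GoldenIntˣ where
  val := ω
  inv := ω - 1
  val_inv := by ext <;> simp
  inv_val := by ext <;> simp

theorem toReal_omegaUnit : toReal omegaUnit = φ := by
  simp [toReal, embedding_apply, omegaUnit]

theorem conjToReal_omegaUnit : conjToReal omegaUnit = ψ := by
  simp [conjToReal, embedding_apply, omegaUnit]

theorem toReal_omegaUnit_sq : toReal ↑(omegaUnit ^ 2) = (3 + √5) / 2 := by
  rw [Units.val_pow_eq_pow_val, map_pow, toReal_omegaUnit, Real.goldenRatio_sq]
  ring

theorem conjToReal_omegaUnit_sq :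
    conjToReal ↑(omegaUnit ^ 2) = (toReal ↑(omegaUnit ^ 2))⁻¹ := by
  simp only [Units.val_pow_eq_pow_val, map_pow, toReal_omegaUnit, conjToReal_omegaUnit,
    ← inv_pow, Real.inv_goldenRatio, neg_sq]

end GoldenInt

section FormPreserving

variable {n R : Type*} [Fintype n] [DecidableEq n] [CommRing R]

def formPreservingPairs (J : Matrix n n R) : Subgroup (GL n R × GL n R) where
  carrier := {p | (p.1 : Matrix n n R)ᵀ * J * p.2 = J}
  one_mem' := by simp
  mul_mem' := by
    rintro ⟨A, B⟩ ⟨C, D⟩ hAB hCD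
    simp only [Set.mem_ofPred_eq, Prod.fst_mul, Prod.snd_mul, Units.val_mul,
      transpose_mul] at *
    calc (C : Matrix n n R)ᵀ * (A : Matrix n n R)ᵀ * J * (B * D)
        = (C : Matrix n n R)ᵀ * ((A : Matrix n n R)ᵀ * J * B) * D := by
          simp only [Matrix.mul_assoc]
      _ = J := by rw [hAB, hCD]
  inv_mem' := by
    rintro ⟨A, B⟩ hAB
    simp only [Set.mem_ofPred_eq, Prod.fst_inv, Prod.snd_inv] at *
    calc ((A⁻¹ : GL n R) : Matrix n n R)ᵀ * J * (B⁻¹ : GL n R)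
        = ((A⁻¹ : GL n R) : Matrix n n R)ᵀ * ((A : Matrix n n R)ᵀ * J * B) *
            (B⁻¹ : GL n R) := by rw [hAB]
      _ = J := by
          rw [← Matrix.mul_assoc, ← Matrix.mul_assoc, ← transpose_mul, ← Units.val_mul,
            mul_inv_cancel, Matrix.mul_assoc, ← Units.val_mul, mul_inv_cancel]
          simp

theorem mem_formPreservingPairs_iff {J : Matrix n n R} {p : GL n R × GL n R} :
    p ∈ formPreservingPairs J ↔ (p.1 : Matrix n n R)ᵀ * J * p.2 = J :=
  Iff.rfl

theorem eq_of_mem_formPreservingPairs {J : Matrix n n R} (hJ : IsUnit J.det)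
    {A B : GL n R} (h : (A, B) ∈ formPreservingPairs J) :
    (B : Matrix n n R) = J⁻¹ * ((A⁻¹ : GL n R) : Matrix n n R)ᵀ * J := by
  rw [mem_formPreservingPairs_iff] at h
  calc (B : Matrix n n R)
      = J⁻¹ * (((A⁻¹ : GL n R) : Matrix n n R)ᵀ * (A : Matrix n n R)ᵀ) * J * B := by
        rw [← transpose_mul, ← Units.val_mul, mul_inv_cancel, Units.val_one, transpose_one,
          Matrix.mul_one, nonsing_inv_mul J hJ, Matrix.one_mul]
    _ = J⁻¹ * ((A⁻¹ : GL n R) : Matrix n n R)ᵀ * ((A : Matrix n n R)ᵀ * J * B) := by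
        simp only [Matrix.mul_assoc]
    _ = J⁻¹ * ((A⁻¹ : GL n R) : Matrix n n R)ᵀ * J := by rw [h]

end FormPreserving

theorem Subgroup.discreteTopology_of_eventually_eq_one {G : Type*} [Group G]
    [TopologicalSpace G] [IsTopologicalGroup G] {H : Subgroup G}
    (h : ∀ᶠ g in 𝓝 (1 : G), g ∈ H → g = 1) : DiscreteTopology H := by
  rw [discreteTopology_iff_isOpen_singleton_one, isOpen_singleton_iff_nhds_eq_pure]
  refine le_antisymm (le_pure_iff.2 ?_) (pure_le_nhds 1)
  rw [nhds_subtype, Filter.mem_comap]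
  exact ⟨_, h, fun g hg => Subtype.ext (hg g.2)⟩

section GoldenUnitary

variable {n : Type*} [Fintype n] [DecidableEq n]

/-- The `ℤ[φ]`-points of the unitary group of `J` relative to the Galois conjugation `φ ↦ ψ`. -/
noncomputable def goldenUnitaryGroup (J : Matrix n n ℝ) : Subgroup (GL n GoldenInt) :=
  (formPreservingPairs J).comap
    ((GeneralLinearGroup.map GoldenInt.toReal).prod (GeneralLinearGroup.map GoldenInt.conjToReal))

theorem discreteTopology_map_goldenUnitaryGroup {J : Matrix n n ℝ} (hJ : IsUnit J.det) :
    DiscreteTopology ((goldenUnitaryGroup J).map (GeneralLinearGroup.map GoldenInt.toReal)) := by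
  set conj : GL n ℝ → Matrix n n ℝ := fun A => J⁻¹ * ((A⁻¹ : GL n ℝ) : Matrix n n ℝ)ᵀ * J
  have hconj_cont : Continuous conj := by fun_prop
  have hconj_one : conj 1 = 1 := by simp [conj, nonsing_inv_mul J hJ]
  have near (f : GL n ℝ → Matrix n n ℝ) (hf : Continuous f) (i j : n) :
      ∀ᶠ A in 𝓝 (1 : GL n ℝ), |f A i j - f 1 i j| < 1 / 2 :=
    Metric.tendsto_nhds.1 ((continuous_apply_apply i j).comp hf).continuousAt _ (by norm_num)
  refine Subgroup.discreteTopology_of_eventually_eq_one ?_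
  filter_upwards [eventually_all.2 fun i => eventually_all.2 fun j =>
    (near _ Units.continuous_val i j).and (near conj hconj_cont i j)]
    with A hA hAH
  obtain ⟨M, hM, rfl⟩ := hAH
  have hconjM : (GeneralLinearGroup.map GoldenInt.conjToReal M : Matrix n n ℝ) =
      conj (GeneralLinearGroup.map GoldenInt.toReal M) :=
    eq_of_mem_formPreservingPairs hJ hM
  suffices M = 1 by simp [this]
  refine Units.ext (GoldenInt.matrix_eq_of_abs_sub_lt_half (fun i j => ?_) (fun i j => ?_))
  · simpa [one_apply, apply_ite] using (hA i j).1
  · rw [hconj_one, ← hconjM] at hA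
    simpa [one_apply, apply_ite] using (hA i j).2

end GoldenUnitary

section Burau

variable {R : Type*} [CommRing R]

def burauMatrix (t : R) : Fin 3 → Matrix (Fin 3) (Fin 3) R
  | 0 => !![-t, 1, 0; 0, 1, 0; 0, 0, 1]
  | 1 => !![1, 0, 0; t, -t, 1; 0, 0, 1]
  | 2 => !![1, 0, 0; 0, 1, 0; 0, t, -t]

theorem det_burauMatrix (t : R) (i : Fin 3) : (burauMatrix t i).det = -t := by
  fin_cases i <;> simp [burauMatrix, det_fin_three]

theorem map_burauMatrix {S : Type*} [CommRing S] (f : R →+* S) (t : R) (i : Fin 3) :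
    (burauMatrix t i).map f = burauMatrix (f t) i := by
  fin_cases i <;> ext a b <;> fin_cases a <;> fin_cases b <;> simp [burauMatrix]

noncomputable def burauGL (t : Rˣ) (i : Fin 3) : GL (Fin 3) R :=
  GeneralLinearGroup.mk'' (burauMatrix t i) (by simp [det_burauMatrix])

theorem coe_map_burauGL {S : Type*} [CommRing S] (f : R →+* S) (t : Rˣ) (i : Fin 3) :
    (GeneralLinearGroup.map f (burauGL t i) : Matrix (Fin 3) (Fin 3) S) =
      burauMatrix (f t) i := by
  simp [burauGL, map_burauMatrix]

def squierForm (t : R) : Matrix (Fin 3) (Fin 3) R :=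
  !![1 + t, -t, 0; -1, 1 + t, -t; 0, -1, 1 + t]

theorem det_squierForm (t : R) : (squierForm t).det = (1 + t) * (1 + t ^ 2) := by
  simp [squierForm, det_fin_three]
  ring

theorem burauMatrix_transpose_mul_squierForm_mul_burauMatrix_inv {K : Type*} [Field K]
    {t : K} (ht : t ≠ 0) (i : Fin 3) :
    (burauMatrix t i)ᵀ * squierForm t * burauMatrix t⁻¹ i = squierForm t := by
  fin_cases i <;> ext a b <;> fin_cases a <;> fin_cases b <;>
    simp [burauMatrix, squierForm, mul_apply, Fin.sum_univ_three] <;> field_simp <;> ring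

end Burau

theorem burauGL_mem_goldenUnitaryGroup (i : Fin 3) :
    burauGL (GoldenInt.omegaUnit ^ 2) i ∈ goldenUnitaryGroup (squierForm ((3 + √5) / 2)) := by
  change _ ∈ formPreservingPairs _
  rw [mem_formPreservingPairs_iff]
  simp only [MonoidHom.prod_apply, coe_map_burauGL, GoldenInt.conjToReal_omegaUnit_sq,
    GoldenInt.toReal_omegaUnit_sq]
  exact burauMatrix_transpose_mul_squierForm_mul_burauMatrix_inv (by positivity) i

theorem IsBurau4.coe_apply_b4 {t : ℝ} {S : B4 →* GL (Fin 3) ℝ} (hS : IsBurau4 t S) (i : Fin 3) :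
    (S (b4 i) : Matrix (Fin 3) (Fin 3) ℝ) = burauMatrix t i := by
  fin_cases i
  exacts [hS.1, hS.2.1, hS.2.2]

theorem burau_B4_discrete_at_golden
    (S : B4 →* GL (Fin 3) ℝ) (hS : IsBurau4 ((3 + Real.sqrt 5) / 2) S) :
    DiscreteTopology ↥S.range := by
  have hgen (i : Fin 3) :
      S (b4 i) = GeneralLinearGroup.map GoldenInt.toReal (burauGL (GoldenInt.omegaUnit ^ 2) i) :=
    Units.ext (by rw [coe_map_burauGL, GoldenInt.toReal_omegaUnit_sq, hS.coe_apply_b4])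
  have hrange : S.range ≤ (goldenUnitaryGroup (squierForm ((3 + √5) / 2))).map
      (GeneralLinearGroup.map GoldenInt.toReal) := by
    rw [MonoidHom.range_eq_map, ← PresentedGroup.closure_range_of, MonoidHom.map_closure,
      Subgroup.closure_le]
    rintro _ ⟨_, ⟨i, rfl⟩, rfl⟩
    exact ⟨_, burauGL_mem_goldenUnitaryGroup i, (hgen i).symm⟩
  have hJ : IsUnit (squierForm ((3 + √5) / 2 : ℝ)).det := by
    rw [det_squierForm, isUnit_iff_ne_zero]
    positivity
  exact DiscreteTopology.of_subset (discreteTopology_map_goldenUnitaryGroup hJ) hrange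
end
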